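/- arXiv:2107.03097 — 2 statements merged into one kernel-verified Lean document; each statement's English description precedes it below -/
import Mathlib

section
/- Let n ≥ 29 be an integer, let F_n be the n-th Fibonacci number, set G_1 = 0, G_2 = F_n, G_3 = 2^n, let α^(1) < α^(2) < α^(3) be the three real roots of f_n(X) = X·(X − F_n)·(X − 2^n) − 1, and set l_i^(k) = log|α^(k) − G_i|. Then for any i, j, k, l ∈ {1,2,3} with i ≠ j and k ≠ l, the quantity R = |l_i^(k)·l_j^(l) − l_i^(l)·l_j^(k)| is independent of the choice of i, j, k, l, and it satisfies n² < R < 2n². -/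
/-!
Write `F = F_n`, `B = 2^n` and `f(X) = X(X - F)(X - B) - 1 = ∏ₖ (X - α⁽ᵏ⁾)`. Since `f(G_i) = -1`
and `f(α⁽ᵏ⁾) = 0`, both `∏ₖ |α⁽ᵏ⁾ - G_i|` and `∏ᵢ |α⁽ᵏ⁾ - G_i|` equal `1`, so every row and every
column of the matrix `(l_i^(k))` sums to zero, and for such a `3 × 3` matrix all `2 × 2` minors
agree up to sign.

The sign changes of `f` on `[0, 1]`, `[F - 1, F]` and `[B, B + 1]` locate the roots. Eliminating
`l_1^(1)` and `l_2^(2)` through the column relations turns the minor in rows and columns 1, 2 into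
`x v + u y + u v`, where `x = log|α⁽¹⁾ - F|` and `y = log|α⁽²⁾|` lie in `[log(F - 1), log B]` and
`u = log|α⁽¹⁾ - B|`, `v = log|α⁽²⁾ - B|` lie in `[log(B - F), log B]`. This form is increasing in
each entry, so the upper bound is `3 (n log 2)² < 2n²`, and the lower bound follows from
`F - 1 ≥ F_{n-1} ≥ (3/2)^(n-29) F_28 ≥ (3/2)^(n-29) 2^18`, `log(3/2) ≥ 2/5` and `B - F ≥ 2^(n-1)`.
-/

open Real

theorem StrictMono.eq_of_range_subset {n : ℕ} {β : Type*} [LinearOrder β] {f g : Fin n → β}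
    (hf : StrictMono f) (hg : StrictMono g) (h : Set.range f ⊆ Set.range g) : f = g := by
  refine (hf.range_inj hg).mp (Set.eq_of_subset_of_ncard_le h ?_)
  rw [Set.ncard_range_of_injective hf.injective, Set.ncard_range_of_injective hg.injective]

theorem Fin.strictMono_three_iff {β : Type*} [Preorder β] {f : Fin 3 → β} :
    StrictMono f ↔ f 0 < f 1 ∧ f 1 < f 2 := by
  simp [Fin.strictMono_iff_lt_succ, Fin.forall_fin_two]

theorem sub_mul_sub_mul_sub_sub_eq_of_roots {K : Type*} [Field K] {u v w e a b c : K}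
    (hab : a ≠ b) (hac : a ≠ c) (hbc : b ≠ c)
    (ha : (a - u) * (a - v) * (a - w) = e) (hb : (b - u) * (b - v) * (b - w) = e)
    (hc : (c - u) * (c - v) * (c - w) = e) (t : K) :
    (t - u) * (t - v) * (t - w) - e = (t - a) * (t - b) * (t - c) := by
  have hab' : a ^ 2 + a * b + b ^ 2 - (u + v + w) * (a + b) + (u * v + u * w + v * w) = 0 := by
    refine (mul_eq_zero.mp ?_).resolve_left (sub_ne_zero.mpr hab)
    linear_combination ha - hb
  have hbc' : b ^ 2 + b * c + c ^ 2 - (u + v + w) * (b + c) + (u * v + u * w + v * w) = 0 := by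
    refine (mul_eq_zero.mp ?_).resolve_left (sub_ne_zero.mpr hbc)
    linear_combination hb - hc
  have hsum : a + b + c - (u + v + w) = 0 := by
    refine (mul_eq_zero.mp ?_).resolve_left (sub_ne_zero.mpr hac)
    linear_combination hab' - hbc'
  have hsum2 : a * b + a * c + b * c = u * v + u * w + v * w := by
    linear_combination (a + b) * hsum - hab'
  have hprod : a * b * c = u * v * w + e := by
    linear_combination ha - a ^ 2 * hsum + a * hsum2
  linear_combination t ^ 2 * hsum - t * hsum2 + hprod

theorem abs_minor_eq_of_sum_eq_zero {R : Type*} [CommRing R] [LinearOrder R]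
    {M : Fin 3 → Fin 3 → R} (hrow : ∀ i, ∑ k, M i k = 0) (hcol : ∀ k, ∑ i, M i k = 0)
    {i j k m : Fin 3} (hij : i ≠ j) (hkm : k ≠ m) :
    |M i k * M j m - M i m * M j k| = |M 0 0 * M 1 1 - M 0 1 * M 1 0| := by
  simp only [Fin.sum_univ_three] at hrow hcol
  have h02 : M 0 2 = -M 0 0 - M 0 1 := by linear_combination hrow 0
  have h12 : M 1 2 = -M 1 0 - M 1 1 := by linear_combination hrow 1
  have h20 : M 2 0 = -M 0 0 - M 1 0 := by linear_combination hcol 0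
  have h21 : M 2 1 = -M 0 1 - M 1 1 := by linear_combination hcol 1
  have h22 : M 2 2 = M 0 0 + M 0 1 + M 1 0 + M 1 1 := by linear_combination hcol 2 - h02 - h12
  fin_cases i <;> fin_cases j <;> fin_cases k <;> fin_cases m <;>
    simp only [Fin.zero_eta, Fin.mk_one, Fin.reduceFinMk, ne_eq, not_true_eq_false,
      h02, h12, h20, h21, h22] at hij hkm ⊢ <;>
    rw [abs_eq_abs] <;> first | (left; ring1) | (right; ring1)

theorem minor_eq_of_sum_eq_zero {R : Type*} [CommRing R] {M : Fin 3 → Fin 3 → R}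
    (hcol : ∀ k, ∑ i, M i k = 0) :
    M 0 0 * M 1 1 - M 0 1 * M 1 0 = M 1 0 * M 2 1 + M 2 0 * M 0 1 + M 2 0 * M 2 1 := by
  have h₀ := hcol 0
  have h₁ := hcol 1
  simp only [Fin.sum_univ_three] at h₀ h₁
  linear_combination M 1 1 * h₀ - (M 1 0 + M 2 0) * h₁

theorem sum_log_abs_eq_zero_of_prod_eq_one {ι : Type*} [Fintype ι] {f : ι → ℝ}
    (h : ∏ i, f i = 1) : ∑ i, log |f i| = 0 := by
  have hf : ∀ i ∈ Finset.univ, f i ≠ 0 := fun i _ hi ↦ by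
    simp [Finset.prod_eq_zero (Finset.mem_univ i) hi] at h
  simp_rw [log_abs]
  rw [← log_prod hf, h, log_one]

theorem roots_mem_Ioo {F B : ℝ} (hF : 3 ≤ F) (hFB : F ≤ B) {α : Fin 3 → ℝ} (hα : StrictMono α)
    (hfact : ∀ t, t * (t - F) * (t - B) - 1 = (t - α 0) * (t - α 1) * (t - α 2)) :
    α 0 ∈ Set.Ioo 0 1 ∧ α 1 ∈ Set.Ioo (F - 1) F ∧ α 2 ∈ Set.Ioo B (B + 1) := by
  set f : ℝ → ℝ := fun t ↦ t * (t - F) * (t - B) - 1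
  have hf : Continuous f := by fun_prop
  obtain ⟨r₀, hr₀, hf₀⟩ := intermediate_value_Ioo (zero_le_one' ℝ) hf.continuousOn
    (show (0 : ℝ) ∈ Set.Ioo (f 0) (f 1) by constructor <;> simp only [f] <;> nlinarith)
  obtain ⟨r₁, hr₁, hf₁⟩ := intermediate_value_Ioo' (sub_one_lt F).le hf.continuousOn
    (show (0 : ℝ) ∈ Set.Ioo (f F) (f (F - 1)) by constructor <;> simp only [f] <;> nlinarith)
  obtain ⟨r₂, hr₂, hf₂⟩ := intermediate_value_Ioo (lt_add_one B).le hf.continuousOn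
    (show (0 : ℝ) ∈ Set.Ioo (f B) (f (B + 1)) by constructor <;> simp only [f] <;> nlinarith)
  have hr : StrictMono ![r₀, r₁, r₂] := Fin.strictMono_three_iff.mpr <| by
    simp only [Matrix.cons_val]
    constructor <;> linarith [hr₀.2, hr₁.1, hr₁.2, hr₂.1]
  have hroot : ∀ {r}, f r = 0 → r ∈ Set.range α := fun {r} h ↦ by
    simp only [f, hfact, mul_eq_zero, sub_eq_zero] at h
    rcases h with (h | h) | h <;> exact ⟨_, h.symm⟩
  have := hr.eq_of_range_subset hα <| Set.range_subset_iff.mpr fun i ↦ by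
    fin_cases i
    exacts [hroot hf₀, hroot hf₁, hroot hf₂]
  rw [← this]
  exact ⟨hr₀, hr₁, hr₂⟩

theorem sum_log_abs_sub_eq_zero {F B : ℝ} {α : Fin 3 → ℝ}
    (hfact : ∀ t, t * (t - F) * (t - B) - 1 = (t - α 0) * (t - α 1) * (t - α 2)) :
    (∀ i, ∑ k, log |α k - ![0, F, B] i| = 0) ∧ ∀ k, ∑ i, log |α k - ![0, F, B] i| = 0 := by
  constructor
  · intro i
    apply sum_log_abs_eq_zero_of_prod_eq_one
    have hG : ![0, F, B] i * (![0, F, B] i - F) * (![0, F, B] i - B) = 0 := by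
      fin_cases i <;> simp
    rw [Fin.prod_univ_three]
    linear_combination hfact (![0, F, B] i) - hG
  · intro k
    apply sum_log_abs_eq_zero_of_prod_eq_one
    have hα : (α k - α 0) * (α k - α 1) * (α k - α 2) = 0 := by
      fin_cases k <;> simp
    simp only [Fin.prod_univ_three, Matrix.cons_val_zero, Matrix.cons_val_one,
      Matrix.cons_val_two, Matrix.head_cons, Matrix.tail_cons, sub_zero]
    linear_combination hfact (α k) + hα

theorem Nat.two_mul_fib_le_two_pow (n : ℕ) : 2 * fib n ≤ 2 ^ n := by
  induction n using Nat.twoStepInduction with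
  | zero => simp
  | one => simp
  | more k h₀ h₁ =>
    rw [fib_add_two, pow_succ, pow_succ]
    rw [pow_succ] at h₁
    omega

theorem Nat.three_mul_fib_le_two_mul_fib_succ {j : ℕ} (hj : 2 ≤ j) :
    3 * fib j ≤ 2 * fib (j + 1) := by
  obtain ⟨i, rfl⟩ : ∃ i, j = i + 2 := ⟨j - 2, by omega⟩
  show 3 * fib (i + 2) ≤ 2 * fib (i + 3)
  have h₁ : fib (i + 3) = fib (i + 1) + fib (i + 2) := fib_add_two
  have h₂ : fib (i + 2) = fib i + fib (i + 1) := fib_add_two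
  have h₃ : fib i ≤ fib (i + 1) := fib_le_fib_succ
  omega

theorem Nat.three_halves_pow_mul_fib_le {m : ℕ} (hm : 2 ≤ m) (k : ℕ) :
    (3 / 2 : ℝ) ^ k * fib m ≤ fib (m + k) := by
  induction k with
  | zero => simp
  | succ k ih =>
    have h : (3 : ℝ) * fib (m + k) ≤ 2 * fib (m + k + 1) := by
      exact_mod_cast three_mul_fib_le_two_mul_fib_succ (by omega)
    calc (3 / 2 : ℝ) ^ (k + 1) * fib m = 3 / 2 * ((3 / 2) ^ k * fib m) := by ring
      _ ≤ 3 / 2 * fib (m + k) := by gcongr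
      _ ≤ fib (m + (k + 1)) := by rw [← add_assoc]; linarith

theorem two_fifths_le_log_three_halves : 2 / 5 ≤ log (3 / 2) := by
  rw [le_log_iff_exp_le (by norm_num)]
  refine (pow_le_pow_iff_left₀ (exp_pos _).le (by norm_num) (by norm_num : 5 ≠ 0)).mp ?_
  calc exp (2 / 5) ^ 5 = exp 1 ^ 2 := by rw [← exp_nat_mul, ← exp_nat_mul]; norm_num
    _ ≤ 2.7182818286 ^ 2 := by gcongr; exact exp_one_lt_d9.le
    _ ≤ (3 / 2) ^ 5 := by norm_num

theorem log_fib_sub_one_ge {n : ℕ} (hn : 29 ≤ n) :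
    2 / 5 * ((n : ℝ) - 29) + 18 * log 2 ≤ log (Nat.fib n - 1) := by
  obtain ⟨k, rfl⟩ : ∃ k, n = 28 + k + 1 := ⟨n - 29, by omega⟩
  have hfib : (Nat.fib (28 + k) : ℝ) ≤ Nat.fib (28 + k + 1) - 1 := by
    have h := Nat.fib_add_two (n := 27 + k)
    have h₀ := Nat.fib_pos.mpr (show 0 < 27 + k by omega)
    rw [show 27 + k + 2 = 28 + k + 1 by omega, show 27 + k + 1 = 28 + k by omega] at h
    rw [le_sub_iff_add_le]
    exact_mod_cast (show Nat.fib (28 + k) + 1 ≤ Nat.fib (28 + k + 1) by omega)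
  have hpow : (3 / 2 : ℝ) ^ k * 2 ^ 18 ≤ Nat.fib (28 + k + 1) - 1 := by
    have h28 : (2 : ℝ) ^ 18 ≤ Nat.fib 28 := by norm_num [Nat.fib_add_two]
    calc (3 / 2 : ℝ) ^ k * 2 ^ 18 ≤ (3 / 2) ^ k * Nat.fib 28 := by gcongr
      _ ≤ Nat.fib (28 + k) := Nat.three_halves_pow_mul_fib_le (by norm_num) k
      _ ≤ _ := hfib
  calc 2 / 5 * (((28 + k + 1 : ℕ) : ℝ) - 29) + 18 * log 2 ≤ k * log (3 / 2) + 18 * log 2 := by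
        push_cast
        nlinarith [two_fifths_le_log_three_halves, (Nat.cast_nonneg k : (0 : ℝ) ≤ k)]
    _ = log ((3 / 2) ^ k * 2 ^ 18) := by
        rw [log_mul (by positivity) (by positivity), log_pow, log_pow]; push_cast; ring
    _ ≤ log (Nat.fib (28 + k + 1) - 1) := log_le_log (by positivity) hpow

theorem log_two_pow_sub_fib_ge (n : ℕ) : ((n : ℝ) - 1) * log 2 ≤ log (2 ^ n - Nat.fib n) := by
  have h : (2 : ℝ) ^ n / 2 ≤ 2 ^ n - Nat.fib n := by
    have : (2 * Nat.fib n : ℝ) ≤ 2 ^ n := by exact_mod_cast Nat.two_mul_fib_le_two_pow n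
    linarith
  calc ((n : ℝ) - 1) * log 2 = log (2 ^ n / 2) := by
        rw [log_div (by positivity) (by norm_num), log_pow]; ring
    _ ≤ log (2 ^ n - Nat.fib n) := log_le_log (by positivity) h

theorem sq_lt_two_mul_mul_add_sq {n A C : ℝ} (hn : 29 ≤ n)
    (hA : 2 / 5 * (n - 29) + 18 * log 2 ≤ A) (hC : (n - 1) * log 2 ≤ C) :
    n ^ 2 < 2 * A * C + C ^ 2 := by
  have hL : 0.693 ≤ log 2 := log_two_gt_d9.le.trans' (by norm_num)
  have hA' : 2 / 5 * (n - 29) + 18 * 0.693 ≤ A := by nlinarith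
  have hC' : (n - 1) * 0.693 ≤ C := by nlinarith
  calc n ^ 2 < 2 * (2 / 5 * (n - 29) + 18 * 0.693) * ((n - 1) * 0.693) + ((n - 1) * 0.693) ^ 2 := by
        nlinarith
    _ ≤ 2 * A * C + C ^ 2 := by gcongr <;> nlinarith

theorem regulator_mem_Ioo_of_mem_Ioo {n : ℕ} (hn : 29 ≤ n) {a b : ℝ} (ha : a ∈ Set.Ioo 0 1)
    (hb : b ∈ Set.Ioo ((Nat.fib n : ℝ) - 1) (Nat.fib n)) :
    (n : ℝ) ^ 2 < log |a - Nat.fib n| * log |b - 2 ^ n| + log |a - 2 ^ n| * log |b|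
        + log |a - 2 ^ n| * log |b - 2 ^ n| ∧
      log |a - Nat.fib n| * log |b - 2 ^ n| + log |a - 2 ^ n| * log |b|
        + log |a - 2 ^ n| * log |b - 2 ^ n| < 2 * (n : ℝ) ^ 2 := by
  obtain ⟨ha₀, ha₁⟩ := ha
  obtain ⟨hb₀, hb₁⟩ := hb
  have hF : (3 : ℝ) ≤ Nat.fib n := by exact_mod_cast Nat.fib_mono (show 4 ≤ n by omega)
  have hFB : 2 * (Nat.fib n : ℝ) ≤ 2 ^ n := by exact_mod_cast Nat.two_mul_fib_le_two_pow n
  have hA := log_fib_sub_one_ge hn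
  have hC := log_two_pow_sub_fib_ge n
  have hB : log ((2 : ℝ) ^ n) = n * log 2 := log_pow 2 n
  set F : ℝ := (Nat.fib n : ℝ)
  set B : ℝ := (2 : ℝ) ^ n
  rw [abs_sub_comm, abs_of_pos (by linarith), abs_of_neg (by linarith), abs_of_neg (by linarith),
    abs_of_pos (by linarith), neg_sub, neg_sub]
  have hA₀ : 0 ≤ log (F - 1) := log_nonneg (by linarith)
  have hC₀ : 0 ≤ log (B - F) := log_nonneg (by linarith)
  have hx : log (F - 1) ≤ log (F - a) ∧ log (F - a) ≤ log B :=
    ⟨log_le_log (by linarith) (by linarith), log_le_log (by linarith) (by linarith)⟩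
  have hy : log (F - 1) ≤ log b ∧ log b ≤ log B :=
    ⟨log_le_log (by linarith) (by linarith), log_le_log (by linarith) (by linarith)⟩
  have hu : log (B - F) ≤ log (B - a) ∧ log (B - a) ≤ log B :=
    ⟨log_le_log (by linarith) (by linarith), log_le_log (by linarith) (by linarith)⟩
  have hv : log (B - F) ≤ log (B - b) ∧ log (B - b) ≤ log B :=
    ⟨log_le_log (by linarith) (by linarith), log_le_log (by linarith) (by linarith)⟩
  constructor
  · calc (n : ℝ) ^ 2 < 2 * log (F - 1) * log (B - F) + log (B - F) ^ 2 :=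
          sq_lt_two_mul_mul_add_sq (by exact_mod_cast hn) hA hC
      _ = log (F - 1) * log (B - F) + log (B - F) * log (F - 1) + log (B - F) * log (B - F) := by
          ring
      _ ≤ _ := by gcongr <;> linarith
  · calc _ ≤ log B * log B + log B * log B + log B * log B := by
          gcongr <;> linarith
      _ = 3 * log 2 ^ 2 * (n : ℝ) ^ 2 := by rw [hB]; ring
      _ < 2 * (n : ℝ) ^ 2 := by
          have : (0 : ℝ) < n := by exact_mod_cast (show 0 < n by omega)
          have h₂ : log 2 < 0.6931471808 := log_two_lt_d9
          have h₂' : 0 < log 2 := log_pos one_lt_two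
          gcongr
          nlinarith

/-- The regulator-type quantity `R = |l i k · l j m − l i m · l j k|` (with
`l i k = log |α⁽ᵏ⁾ - Gᵢ|`, `i ≠ j`, `k ≠ m`) is independent of the choice of
indices and satisfies `n² < R < 2n²`. -/
theorem regulator_estimate (n : ℕ) (hn : 29 ≤ n)
    (G α : Fin 3 → ℝ)
    (hG : G = ![0, (Nat.fib n : ℝ), 2 ^ n])
    (hord : α 0 < α 1 ∧ α 1 < α 2)
    (hroot : ∀ i, α i * (α i - (Nat.fib n : ℝ)) * (α i - 2 ^ n) - 1 = 0)
    (l : Fin 3 → Fin 3 → ℝ)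
    (hl : ∀ i k, l i k = Real.log |α k - G i|) :
    (∀ i j k m i' j' k' m' : Fin 3, i ≠ j → k ≠ m → i' ≠ j' → k' ≠ m' →
      |l i k * l j m - l i m * l j k| = |l i' k' * l j' m' - l i' m' * l j' k'|) ∧
    (∀ i j k m : Fin 3, i ≠ j → k ≠ m →
      (n : ℝ) ^ 2 < |l i k * l j m - l i m * l j k| ∧
      |l i k * l j m - l i m * l j k| < 2 * (n : ℝ) ^ 2) := by
  have hF : (3 : ℝ) ≤ Nat.fib n := by exact_mod_cast Nat.fib_mono (show 4 ≤ n by omega)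
  have hFB : (Nat.fib n : ℝ) ≤ 2 ^ n := by
    have := Nat.two_mul_fib_le_two_pow n
    exact_mod_cast (show Nat.fib n ≤ 2 ^ n by omega)
  have hα := Fin.strictMono_three_iff.mpr hord
  have hfact (t : ℝ) :
      t * (t - Nat.fib n) * (t - 2 ^ n) - 1 = (t - α 0) * (t - α 1) * (t - α 2) := by
    simpa using sub_mul_sub_mul_sub_sub_eq_of_roots (u := 0) (hα.injective.ne (by decide))
      (hα.injective.ne (by decide)) (hα.injective.ne (by decide))
      (by linear_combination hroot 0) (by linear_combination hroot 1)
      (by linear_combination hroot 2) t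
  obtain ⟨h₀, h₁, -⟩ := roots_mem_Ioo hF hFB hα hfact
  obtain ⟨hlo, hhi⟩ := regulator_mem_Ioo_of_mem_Ioo hn h₀ h₁
  subst hG
  obtain ⟨hrow, hcol⟩ := sum_log_abs_sub_eq_zero hfact
  simp only [← hl] at hrow hcol
  have hminor {i j k m : Fin 3} (hij : i ≠ j) (hkm : k ≠ m) :=
    abs_minor_eq_of_sum_eq_zero hrow hcol hij hkm
  refine ⟨fun i j k m i' j' k' m' hij hkm hij' hkm' ↦ by rw [hminor hij hkm, hminor hij' hkm'],
    fun i j k m hij hkm ↦ ?_⟩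
  rw [hminor hij hkm, minor_eq_of_sum_eq_zero hcol]
  simp only [hl, Matrix.cons_val_zero, Matrix.cons_val_one, Matrix.cons_val_two,
    Matrix.head_cons, Matrix.tail_cons, sub_zero]
  rw [abs_of_pos ((sq_nonneg _).trans_lt hlo)]
  exact ⟨hlo, hhi⟩
end

section
/- Let n ≥ 29 be an integer, let F_n be the n-th Fibonacci number, set G_1 = 0, G_2 = F_n, G_3 = 2^n, let α^(1) < α^(2) < α^(3) be the three real roots of f_n(X) = X·(X − F_n)·(X − 2^n) − 1, and set l_i^(k) = log|α^(k) − G_i|. Let (x, y) be an integer solution of x·(x − F_n·y)·(x − 2^n·y) − y³ = ±1 with |y| ≥ 2, set β^(i) = x − α^(i)·y, and let j ∈ {1,2,3} be such that |β^(j)| = min{|β^(1)|, |β^(2)|, |β^(3)|}, with {j, k, l} = {1,2,3}. Then for i = k and i = l one has |log|β^(i)| − log|y| − l_j^(i)| ≤ 0.4^n. -/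
/-!
Write `F = F_n`, `N = 2ⁿ` and `a = 8 / (F N)`. The cubic `X (X - F) (X - N) - 1` takes the value
`-1` at `0`, `F`, `N` and is positive at `a`, `F - a`, `N + a`, so its roots satisfy
`|α⁽ᵏ⁾ - G_k| < a`. The product `β⁽¹⁾ β⁽²⁾ β⁽³⁾` is the binary cubic form evaluated at `(x, y)`,
hence `±1`; since `β⁽ᵏ⁾ - β⁽ʲ⁾ = (α⁽ʲ⁾ - α⁽ᵏ⁾) y`, minimality of `|β⁽ʲ⁾|` forces
`|β⁽ʲ⁾| ≤ |y| / ∏_{k ≠ j} |α⁽ʲ⁾ - α⁽ᵏ⁾| ≤ 8 |y| / (F N)`. Then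
`β⁽ⁱ⁾ = (G_j - α⁽ⁱ⁾) y + β⁽ʲ⁾ + (α⁽ʲ⁾ - G_j) y` agrees with `(G_j - α⁽ⁱ⁾) y` up to a relative error
`32 / (F² N)`, and `F² ≥ 2ⁿ / 4` makes twice this at most `0.4ⁿ`.
-/

open Finset

namespace Nat

lemma two_mul_fib_le_two_pow_s12 (n : ℕ) : 2 * fib n ≤ 2 ^ n := by
  induction n using Nat.twoStepInduction with
  | zero => simp
  | one => simp
  | more n ih₁ ih₂ =>
    rw [fib_add_two, pow_succ, pow_succ]
    rw [pow_succ] at ih₂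
    omega

lemma two_pow_le_four_mul_fib_sq {n : ℕ} (hn : n ≠ 0) : 2 ^ n ≤ 4 * fib n ^ 2 := by
  obtain ⟨m, rfl⟩ := exists_eq_succ_of_ne_zero hn
  clear hn
  induction m using Nat.twoStepInduction with
  | zero => simp
  | one => simp [fib_add_two]
  | more m ih _ =>
    have h : 2 * fib (m + 1) ≤ fib (m + 3) := by
      rw [fib_add_two]
      have := fib_le_fib_succ (n := m + 1)
      omega
    calc 2 ^ (m + 3) = 4 * 2 ^ (m + 1) := by ring
      _ ≤ 4 * (4 * fib (m + 1) ^ 2) := by gcongr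
      _ = 4 * (2 * fib (m + 1)) ^ 2 := by ring
      _ ≤ 4 * fib (m + 3) ^ 2 := by gcongr

end Nat

lemma Real.abs_log_sub_log_le {u v t : ℝ} (hv : 0 < v) (ht : t ≤ 1 / 2)
    (h : |u - v| ≤ t * v) : |Real.log u - Real.log v| ≤ 2 * t := by
  obtain ⟨hlo, hhi⟩ := abs_le.mp h
  have ht0 : 0 ≤ t := nonneg_of_mul_nonneg_left ((abs_nonneg _).trans h) hv
  have hu : 0 < u := by nlinarith
  rw [← Real.log_div hu.ne' hv.ne', abs_le]
  have hr : 1 - t ≤ u / v := by rw [le_div_iff₀ hv]; linarith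
  have hr' : u / v ≤ 1 + t := by rw [div_le_iff₀ hv]; linarith
  have hinv : (u / v)⁻¹ ≤ 1 + 2 * t := by
    rw [inv_le_iff_one_le_mul₀ (by positivity)]; nlinarith
  constructor
  · linarith [Real.one_sub_inv_le_log_of_pos (div_pos hu hv)]
  · linarith [Real.log_le_sub_one_of_pos (div_pos hu hv)]

lemma cubic_form_eq_prod_of_roots {K : Type*} [CommRing K] [IsDomain K] {b c d : K}
    {α : Fin 3 → K} (hα : Function.Injective α)
    (hroot : ∀ k, α k ^ 3 + b * α k ^ 2 + c * α k + d = 0) (x y : K) :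
    x ^ 3 + b * x ^ 2 * y + c * x * y ^ 2 + d * y ^ 3 = ∏ k, (x - α k * y) := by
  have hsub : ∀ {k l : Fin 3}, k ≠ l → α k - α l ≠ 0 := fun h => sub_ne_zero.mpr (hα.ne h)
  have q₁ : α 0 ^ 2 + α 0 * α 1 + α 1 ^ 2 + b * (α 0 + α 1) + c = 0 :=
    (mul_eq_zero.mp (by linear_combination hroot 0 - hroot 1 :
      (α 0 - α 1) * (α 0 ^ 2 + α 0 * α 1 + α 1 ^ 2 + b * (α 0 + α 1) + c) = 0)).resolve_left
      (hsub (by decide))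
  have q₂ : α 0 ^ 2 + α 0 * α 2 + α 2 ^ 2 + b * (α 0 + α 2) + c = 0 :=
    (mul_eq_zero.mp (by linear_combination hroot 0 - hroot 2 :
      (α 0 - α 2) * (α 0 ^ 2 + α 0 * α 2 + α 2 ^ 2 + b * (α 0 + α 2) + c) = 0)).resolve_left
      (hsub (by decide))
  have e₁ : α 0 + α 1 + α 2 = -b := by
    have := (mul_eq_zero.mp (by linear_combination q₁ - q₂ :
      (α 1 - α 2) * (α 0 + α 1 + α 2 + b) = 0)).resolve_left (hsub (by decide))
    linear_combination this
  have e₂ : α 0 * α 1 + α 0 * α 2 + α 1 * α 2 = c := by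
    linear_combination (α 0 + α 1) * e₁ - q₁
  have e₃ : α 0 * α 1 * α 2 = -d := by
    linear_combination hroot 0 - α 0 ^ 2 * e₁ + α 0 * e₂
  rw [Fin.prod_univ_three]
  linear_combination x ^ 2 * y * e₁ - x * y ^ 2 * e₂ + y ^ 3 * e₃

lemma exists_mem_Ioo_of_mul_neg {ι : Type*} [Fintype ι] {p : ℝ → ℝ} {α : ι → ℝ}
    (hp : ∀ t, p t = ∏ k, (t - α k)) {u v : ℝ} (huv : u ≤ v) (h : p u * p v < 0) :
    ∃ k, α k ∈ Set.Ioo u v := by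
  by_contra! hout
  have hsign : ∀ k, 0 ≤ (u - α k) * (v - α k) := fun k => by
    rcases le_or_gt (α k) u with hk | hk
    · exact mul_nonneg (by linarith) (by linarith)
    · have hvk : v ≤ α k := le_of_not_gt fun hkv => hout k ⟨hk, hkv⟩
      exact mul_nonneg_of_nonpos_of_nonpos (by linarith) (by linarith)
  rw [hp, hp, ← prod_mul_distrib] at h
  exact h.not_ge (prod_nonneg fun k _ => hsign k)

lemma abs_root_sub_lt {F N : ℝ} (hF : 4 ≤ F) (hFN : 2 * F ≤ N) {α : Fin 3 → ℝ}
    (hα : StrictMono α) (hroot : ∀ k, α k * (α k - F) * (α k - N) - 1 = 0) (k : Fin 3) :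
    |α k - ![0, F, N] k| < 8 / (F * N) := by
  set a := 8 / (F * N) with ha
  have hF0 : 0 < F := by linarith
  have hN0 : 0 < N := by linarith
  have ha0 : 0 < a := by positivity
  have ha1 : a ≤ 1 / 4 := by
    rw [ha, div_le_iff₀ (by positivity)]; nlinarith
  have hbig : ∀ u v, F / 2 ≤ u → N / 2 ≤ v → 1 < a * u * v := fun u v hu hv => by
    have : a * (F / 2) * (N / 2) = 2 := by rw [ha]; field_simp; norm_num
    nlinarith [mul_le_mul hu hv (by positivity) (by linarith)]
  set p : ℝ → ℝ := fun t => t * (t - F) * (t - N) - 1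
  have hfac : ∀ t, p t = ∏ k, (t - α k) := fun t => by
    have := cubic_form_eq_prod_of_roots (b := -(F + N)) (c := F * N) (d := -1)
      hα.injective (fun k => by linear_combination hroot k) t 1
    simp only [mul_one, one_pow] at this
    rw [← this]
    ring
  obtain ⟨k₀, hk₀⟩ := exists_mem_Ioo_of_mul_neg hfac ha0.le
    (by nlinarith [hbig (F - a) (N - a) (by linarith) (by linarith)] : p 0 * p a < 0)
  obtain ⟨k₁, hk₁⟩ := exists_mem_Ioo_of_mul_neg hfac (by linarith : F - a ≤ F)
    (by nlinarith [hbig (F - a) (N - F + a) (by linarith) (by linarith)] : p (F - a) * p F < 0)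
  obtain ⟨k₂, hk₂⟩ := exists_mem_Ioo_of_mul_neg hfac (by linarith : N ≤ N + a)
    (by nlinarith [hbig (N + a) (N + a - F) (by linarith) (by linarith)] : p N * p (N + a) < 0)
  have hFin3 : ∀ i j k : Fin 3, i < j → j < k → i = 0 ∧ j = 1 ∧ k = 2 := by decide
  obtain ⟨rfl, rfl, rfl⟩ := hFin3 k₀ k₁ k₂ (hα.lt_iff_lt.mp (by linarith [hk₀.2, hk₁.1]))
    (hα.lt_iff_lt.mp (by linarith [hk₁.2, hk₂.1]))
  rw [abs_sub_lt_iff]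
  fin_cases k <;> simp <;> constructor <;> linarith [hk₀.1, hk₀.2, hk₁.1, hk₁.2, hk₂.1, hk₂.2]

lemma le_abs_sub_of_ne {F N : ℝ} (hF : 0 ≤ F) (hFN : 2 * F ≤ N) {i k : Fin 3} (hik : i ≠ k) :
    F ≤ |![0, F, N] i - ![0, F, N] k| := by
  rw [le_abs]
  fin_cases i <;> fin_cases k <;> simp at hik ⊢ <;> first | (left; linarith) | (right; linarith)

lemma le_prod_erase_half_abs_sub {F N : ℝ} (hF : 0 ≤ F) (hFN : 2 * F ≤ N) (j : Fin 3) :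
    F * N / 8 ≤ ∏ k ∈ univ.erase j, |![0, F, N] j - ![0, F, N] k| / 2 := by
  obtain rfl | rfl | rfl : j = 0 ∨ j = 1 ∨ j = 2 := by revert j; decide
  · rw [show univ.erase (0 : Fin 3) = {1, 2} by decide, prod_pair (by decide)]
    simp [abs_of_nonneg hF, abs_of_nonneg (by linarith : 0 ≤ N)]
    nlinarith
  · rw [show univ.erase (1 : Fin 3) = {0, 2} by decide, prod_pair (by decide)]
    simp [abs_of_nonneg hF, abs_of_nonpos (by linarith : F - N ≤ 0)]
    nlinarith
  · rw [show univ.erase (2 : Fin 3) = {0, 1} by decide, prod_pair (by decide)]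
    simp [abs_of_nonneg (by linarith : 0 ≤ N), abs_of_nonneg (by linarith : 0 ≤ N - F)]
    nlinarith

section Perturbation

variable {ι : Type*} [Fintype ι] [DecidableEq ι]

lemma prod_erase_half_abs_sub_le {A G : ι → ℝ} {a δ : ℝ} (hA : ∀ k, |A k - G k| ≤ a)
    (hsep : ∀ i k, i ≠ k → δ ≤ |G i - G k|) (ha : 4 * a ≤ δ) (j : ι) :
    ∏ k ∈ univ.erase j, |G j - G k| / 2 ≤ ∏ k ∈ univ.erase j, |A j - A k| := by
  refine prod_le_prod (fun k _ => by positivity) fun k hk => ?_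
  have hgap := hsep j k (ne_of_mem_erase hk).symm
  linarith [abs_sub_le (G j) (A j) (G k), abs_sub_le (A j) (A k) (G k), abs_sub_comm (G j) (A j),
    hA j, hA k]

variable {A β : ι → ℝ} {x y : ℝ}

lemma abs_mul_prod_erase_abs_sub_le_one (hβ : ∀ k, β k = x - A k * y) (hprod : |∏ k, β k| = 1)
    (hy : 2 ≤ |y|) {j : ι} (hmin : ∀ k, |β j| ≤ |β k|) :
    |β j| * ∏ k ∈ univ.erase j, |A j - A k| ≤ 1 := by
  have hle : ∀ k, |A j - A k| ≤ |β k| := fun k => by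
    have hdiff : |A j - A k| * |y| = |β k - β j| := by
      rw [← abs_mul, hβ, hβ]; ring_nf
    have := abs_sub (β k) (β j)
    nlinarith [hmin k, abs_nonneg (A j - A k)]
  calc |β j| * ∏ k ∈ univ.erase j, |A j - A k|
      ≤ |β j| * ∏ k ∈ univ.erase j, |β k| :=
        mul_le_mul_of_nonneg_left (prod_le_prod (fun k _ => abs_nonneg _) fun k _ => hle k)
          (abs_nonneg _)
    _ = 1 := by rw [mul_prod_erase univ (fun k => |β k|) (mem_univ j), ← abs_prod, hprod]

lemma abs_log_sub_log_sub_log_le (hβ : ∀ k, β k = x - A k * y) (hprod : |∏ k, β k| = 1)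
    (hy : 2 ≤ |y|) {j : ι} (hmin : ∀ k, |β j| ≤ |β k|) {G : ι → ℝ} {a Q t : ℝ} (hQ : 0 < Q)
    (hQA : Q ≤ ∏ k ∈ univ.erase j, |A j - A k|) (ha : |A j - G j| ≤ a) {i : ι}
    (ht : 1 / Q + a ≤ t * |A i - G j|) (ht2 : t ≤ 1 / 2) :
    |Real.log (|β i|) - Real.log (|y|) - Real.log (|A i - G j|)| ≤ 2 * t := by
  set D := |A i - G j|
  have hy0 : 0 < |y| := by linarith
  have hD0 : 0 < D := by
    have ha0 : 0 ≤ a := (abs_nonneg _).trans ha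
    have htD : 0 < t * D := lt_of_lt_of_le (by positivity) ht
    exact (abs_nonneg _).lt_of_ne' (right_ne_zero_of_mul htD.ne')
  have hβj : |β j| ≤ |y| / Q := by
    rw [le_div_iff₀ hQ]
    have := abs_mul_prod_erase_abs_sub_le_one hβ hprod hy hmin
    nlinarith [abs_nonneg (β j)]
  have hclose : |β i - (G j - A i) * y| ≤ t * (|y| * D) := by
    have hsplit : β i - (G j - A i) * y = β j + (A j - G j) * y := by rw [hβ, hβ]; ring
    calc |β i - (G j - A i) * y| ≤ |β j| + |A j - G j| * |y| := by
          rw [hsplit, ← abs_mul]; exact abs_add_le _ _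
      _ ≤ |y| * (1 / Q + a) := by
          rw [mul_add, mul_one_div]
          linarith [mul_le_mul_of_nonneg_right ha hy0.le]
      _ ≤ |y| * (t * D) := by gcongr
      _ = t * (|y| * D) := by ring
  have hDy : |(G j - A i) * y| = |y| * D := by rw [abs_mul, abs_sub_comm, mul_comm]
  rw [sub_sub, ← Real.log_mul hy0.ne' hD0.ne']
  refine Real.abs_log_sub_log_le (by positivity) ht2 ?_
  have := abs_abs_sub_abs_le_abs_sub (β i) ((G j - A i) * y)
  rw [hDy] at this
  exact this.trans hclose

end Perturbation

lemma abs_prod_sub_mul_eq_one {F N : ℤ} {α : Fin 3 → ℝ} (hα : Function.Injective α)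
    (hroot : ∀ k, α k * (α k - F) * (α k - N) - 1 = 0) {x y : ℤ}
    (heq : x * (x - F * y) * (x - N * y) - y ^ 3 = 1 ∨ x * (x - F * y) * (x - N * y) - y ^ 3 = -1) :
    |∏ k, ((x : ℝ) - α k * y)| = 1 := by
  have hform := cubic_form_eq_prod_of_roots (b := -(F + N : ℝ)) (c := F * N) (d := -1) hα
    (fun k => by linear_combination hroot k) x y
  have hnorm : ∏ k, ((x : ℝ) - α k * y) = ((x * (x - F * y) * (x - N * y) - y ^ 3 : ℤ) : ℝ) := by
    rw [← hform]
    push_cast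
    ring
  rcases heq with h | h <;> simp [hnorm, h]

lemma abs_log_sub_log_sub_log_le_of_near {F N : ℝ} (hF : 4 ≤ F) (hFN : 2 * F ≤ N)
    {α β : Fin 3 → ℝ} {x y : ℝ} (hα : ∀ k, |α k - ![0, F, N] k| ≤ 8 / (F * N))
    (hβ : ∀ k, β k = x - α k * y) (hprod : |∏ k, β k| = 1) (hy : 2 ≤ |y|) {j : Fin 3}
    (hmin : ∀ k, |β j| ≤ |β k|) {i : Fin 3} (hij : i ≠ j) :
    |Real.log (|β i|) - Real.log (|y|) - Real.log (|α i - ![0, F, N] j|)| ≤ 64 / (F ^ 2 * N) := by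
  have hF0 : 0 ≤ F := by linarith
  have hN : 8 ≤ N := by linarith
  have hFN32 : 32 ≤ F * N := by nlinarith
  have ha : 4 * (8 / (F * N)) ≤ F := by
    rw [mul_div_assoc', div_le_iff₀ (by positivity)]; nlinarith
  have hD : F / 2 ≤ |α i - ![0, F, N] j| := by
    linarith [le_abs_sub_of_ne hF0 hFN hij, hα i, abs_sub_le (![0, F, N] i) (α i) (![0, F, N] j),
      abs_sub_comm (![0, F, N] i) (α i)]
  refine (abs_log_sub_log_sub_log_le hβ hprod hy hmin (Q := F * N / 8)
    (t := 32 / (F ^ 2 * N)) (by positivity) ?_ (hα j) ?_ ?_).trans_eq (by ring)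
  · exact (le_prod_erase_half_abs_sub hF0 hFN j).trans
      (prod_erase_half_abs_sub_le hα (fun _ _ => le_abs_sub_of_ne hF0 hFN) ha j)
  · calc 1 / (F * N / 8) + 8 / (F * N) = 32 / (F ^ 2 * N) * (F / 2) := by field_simp; ring
      _ ≤ 32 / (F ^ 2 * N) * |α i - ![0, F, N] j| := by gcongr
  · rw [div_le_iff₀ (by positivity)]; nlinarith

lemma sixtyFour_div_fib_sq_mul_two_pow_le {n : ℕ} (hn : 29 ≤ n) :
    64 / ((Nat.fib n : ℝ) ^ 2 * 2 ^ n) ≤ (0.4 : ℝ) ^ n := by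
  have hfib : (2 : ℝ) ^ n ≤ 4 * (Nat.fib n : ℝ) ^ 2 := by
    exact_mod_cast Nat.two_pow_le_four_mul_fib_sq (by omega)
  have h16 : (256 : ℝ) ≤ 1.6 ^ n :=
    le_trans (by norm_num) (pow_le_pow_right₀ (by norm_num) hn)
  have hsplit : (0.4 : ℝ) ^ n * 2 ^ n * 2 ^ n = 1.6 ^ n := by rw [← mul_pow, ← mul_pow]; norm_num
  have hF : (0 : ℝ) < Nat.fib n := by exact_mod_cast Nat.fib_pos.mpr (by omega)
  rw [div_le_iff₀ (by positivity)]
  nlinarith [mul_le_mul_of_nonneg_left hfib (by positivity : (0 : ℝ) ≤ 0.4 ^ n * 2 ^ n)]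

/-- For a solution `(x, y)` with `|y| ≥ 2` of type `j`, and `i ≠ j`, one has
`log |β⁽ⁱ⁾| = log |y| + l j i + L(0.4ⁿ)` where `l j i = log |α⁽ⁱ⁾ - G_j|`. -/
theorem log_beta_estimate (n : ℕ) (hn : 29 ≤ n)
    (G α : Fin 3 → ℝ)
    (hG : G = ![0, (Nat.fib n : ℝ), 2 ^ n])
    (hord : α 0 < α 1 ∧ α 1 < α 2)
    (hroot : ∀ i, α i * (α i - (Nat.fib n : ℝ)) * (α i - 2 ^ n) - 1 = 0)
    (x y : ℤ)
    (heq : x * (x - (Nat.fib n : ℤ) * y) * (x - 2 ^ n * y) - y ^ 3 = 1 ∨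
           x * (x - (Nat.fib n : ℤ) * y) * (x - 2 ^ n * y) - y ^ 3 = -1)
    (hy : 2 ≤ |y|)
    (β : Fin 3 → ℝ) (hβ : ∀ i, β i = (x : ℝ) - α i * (y : ℝ))
    (j : Fin 3) (hmin : ∀ i, |β j| ≤ |β i|) :
    ∀ i, i ≠ j →
      |Real.log (|β i|) - Real.log (|(y : ℝ)|) - Real.log (|α i - G j|)| ≤
        (0.4 : ℝ) ^ n := by
  intro i hij
  subst hG
  have hF : (4 : ℝ) ≤ Nat.fib n := by
    exact_mod_cast (by omega : 4 ≤ n).trans (Nat.le_fib_self (by omega))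
  have hFN : 2 * (Nat.fib n : ℝ) ≤ 2 ^ n := by exact_mod_cast Nat.two_mul_fib_le_two_pow_s12 n
  have hmono : StrictMono α := Fin.strictMono_iff_lt_succ.mpr fun k => by
    fin_cases k
    exacts [hord.1, hord.2]
  have hprod : |∏ k, β k| = 1 := by
    simp_rw [hβ]
    exact abs_prod_sub_mul_eq_one hmono.injective (by exact_mod_cast hroot) (by exact_mod_cast heq)
  have hα k := (abs_root_sub_lt hF hFN hmono hroot k).le
  exact (abs_log_sub_log_sub_log_le_of_near hF hFN hα hβ hprod (by exact_mod_cast hy) hmin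
    hij).trans (sixtyFour_div_fib_sq_mul_two_pow_le hn)
end
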